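/- arXiv:1508.05656 — 6 statements merged into one kernel-verified Lean document; each statement's English description precedes it below -/
import Mathlib

section
/- Let M be an m²×n² complex matrix such that R_{m×n}(M) is symmetric and has rank one. Then there exists an m×n complex matrix A such that M = A ⊗ A. -/
open Matrix Kronecker

/-- `vec A` is the vector of entries of the matrix `A`, indexed by pairs. -/
def vec {F : Type*} [Field F] {α β : Type*} (A : Matrix α β F) : α × β → F :=
  fun p => A p.1 p.2

/-- The rearrangement operator `R_{m×n}`:
`R M ((i,j),(k,l)) = M ((i,k),(j,l))`. -/
def R {F : Type*} [Field F] {m n : ℕ}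
    (M : Matrix (Fin m × Fin m) (Fin n × Fin n) F) :
    Matrix (Fin m × Fin n) (Fin m × Fin n) F :=
  fun p q => M (p.1, q.1) (p.2, q.2)

/-- The `j`-th rearrangement operator `R^{(j)}_{m×n}` on `m^k × n^k` matrices
(here with `k` replaced by `k+1` so that `k ≥ 1` automatically): the entry at
row `(a,b)` and column `(r,c)` is the entry of `M` at the tuples obtained from
`r` and `c` by inserting `a` resp. `b` at position `j`. -/
def Rj {F : Type*} [Field F] {m n k : ℕ} (j : Fin (k + 1))
    (M : Matrix (Fin (k + 1) → Fin m) (Fin (k + 1) → Fin n) F) :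
    Matrix (Fin m × Fin n) ((Fin k → Fin m) × (Fin k → Fin n)) F :=
  fun p q => M (j.insertNth p.1 q.1) (j.insertNth p.2 q.2)

/-- `R^Σ_{m×n} = Σ_j R^{(j)}_{m×n}`. -/
def RSigma {F : Type*} [Field F] {m n k : ℕ}
    (M : Matrix (Fin (k + 1) → Fin m) (Fin (k + 1) → Fin n) F) :
    Matrix (Fin m × Fin n) ((Fin k → Fin m) × (Fin k → Fin n)) F :=
  ∑ j : Fin (k + 1), Rj j M

/-- The `k`-th Kronecker power of an `m×n` matrix, indexed by tuples. -/
def kpow {F : Type*} [Field F] {m n : ℕ} (A : Matrix (Fin m) (Fin n) F) (k : ℕ) :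
    Matrix (Fin k → Fin m) (Fin k → Fin n) F :=
  fun r c => ∏ i, A (r i) (c i)

/-- The `k`-fold Kronecker product of a family of `m×n` matrices,
indexed by tuples. -/
def kprodFam {F : Type*} [Field F] {m n k : ℕ}
    (A : Fin k → Matrix (Fin m) (Fin n) F) :
    Matrix (Fin k → Fin m) (Fin k → Fin n) F :=
  fun r c => ∏ i, A i (r i) (c i)

/-! Over an algebraically closed field a symmetric matrix of rank at most one is `v vᵀ`:
its columns are multiples of one vector `u`, symmetry forces it to be `c • u uᵀ`, and `√c • u`
works. Since `R` merely reindexes entries and sends `A ⊗ A` to `vec A (vec A)ᵀ`, taking `vec A = v`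
gives the Kronecker square root. -/

namespace Matrix

variable {K ι κ : Type*} [Field K]

theorem exists_eq_vecMulVec_of_rank_le_one [Fintype κ] {A : Matrix ι κ K} (hA : A.rank ≤ 1) :
    ∃ u : ι → K, ∃ w : κ → K, A = vecMulVec u w := by
  have := FiniteDimensional.span_of_finite K (Set.finite_range A.col)
  rw [rank_eq_finrank_span_cols, finrank_le_one_iff] at hA
  obtain ⟨u, hu⟩ := hA
  choose w hw using fun q => hu ⟨A.col q, Submodule.subset_span ⟨q, rfl⟩⟩
  refine ⟨u, w, ext fun p q => ?_⟩
  have hcol := congrFun (congrArg Subtype.val (hw q)) p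
  simp only [SetLike.val_smul, Pi.smul_apply, smul_eq_mul, col_apply] at hcol
  rw [vecMulVec_apply, ← hcol, mul_comm]

theorem exists_smul_vecMulVec_self_of_isSymm {u w : ι → K}
    (h : (vecMulVec u w).IsSymm) : ∃ c : K, vecMulVec u w = c • vecMulVec u u := by
  by_cases hu : u = 0
  · exact ⟨0, by simp [hu]⟩
  obtain ⟨p₀, hp₀⟩ : ∃ p, u p ≠ 0 := Function.ne_iff.mp hu
  refine ⟨w p₀ / u p₀, ext fun p q => ?_⟩
  have hsymm : u p₀ * w q = u q * w p₀ := by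
    simpa [vecMulVec_apply] using congrFun (congrFun h q) p₀
  simp only [vecMulVec_apply, smul_apply, smul_eq_mul]
  field_simp
  linear_combination u p * hsymm

theorem exists_eq_vecMulVec_self_of_isSymm_of_rank_le_one [Fintype κ] [IsAlgClosed K]
    {A : Matrix κ κ K} (hsymm : A.IsSymm) (hrank : A.rank ≤ 1) :
    ∃ v : κ → K, A = vecMulVec v v := by
  obtain ⟨u, w, rfl⟩ := exists_eq_vecMulVec_of_rank_le_one hrank
  obtain ⟨c, hc⟩ := exists_smul_vecMulVec_self_of_isSymm hsymm
  obtain ⟨s, hs⟩ := IsAlgClosed.exists_pow_nat_eq c two_pos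
  refine ⟨s • u, ext fun p q => ?_⟩
  rw [hc, ← hs]
  simp only [smul_apply, vecMulVec_apply, Pi.smul_apply, smul_eq_mul]
  ring

end Matrix

section Rearrangement

variable {F : Type*} [Field F] {m n : ℕ}

theorem R_injective : Function.Injective (R : Matrix (Fin m × Fin m) (Fin n × Fin n) F → _) :=
  fun _ _ h => Matrix.ext fun p q => congrFun (congrFun h (p.1, q.1)) (p.2, q.2)

theorem R_kronecker (A B : Matrix (Fin m) (Fin n) F) :
    R (A ⊗ₖ B) = vecMulVec (_root_.vec A) (_root_.vec B) :=
  rfl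

end Rearrangement

/-- If `R_{m×n}(M)` is symmetric of rank one for a complex
matrix `M`, then `M` has a Kronecker square root. -/
theorem stmt_2 {m n : ℕ}
    (M : Matrix (Fin m × Fin m) (Fin n × Fin n) ℂ)
    (hsymm : (R M).IsSymm) (hrank : (R M).rank = 1) :
    ∃ A : Matrix (Fin m) (Fin n) ℂ, M = A ⊗ₖ A := by
  obtain ⟨v, hv⟩ := exists_eq_vecMulVec_self_of_isSymm_of_rank_le_one hsymm hrank.le
  let A : Matrix (Fin m) (Fin n) ℂ := fun i j => v (i, j)
  exact ⟨A, R_injective (hv.trans (R_kronecker A A).symm)⟩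
end

section
/- Let F be a field, k ≥ 1, j ∈ {1,…,k}, and let A₁, …, A_k be m×n matrices over F. Then R^{(j)}_{m×n}(A₁ ⊗ ⋯ ⊗ A_k) = vec(A_j) · vec(A₁ ⊗ ⋯ ⊗ A_{j-1} ⊗ A_{j+1} ⊗ ⋯ ⊗ A_k)ᵀ. -/
open Matrix Kronecker

theorem kprodFam_insertNth {F : Type*} [Field F] {m n k : ℕ} (j : Fin (k + 1))
    (A : Fin (k + 1) → Matrix (Fin m) (Fin n) F) (a : Fin m) (b : Fin n)
    (r : Fin k → Fin m) (c : Fin k → Fin n) :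
    kprodFam A (j.insertNth a r) (j.insertNth b c) =
      A j a b * kprodFam (fun i => A (j.succAbove i)) r c := by
  simp only [kprodFam, Fin.prod_univ_succAbove _ j, Fin.insertNth_apply_same,
    Fin.insertNth_apply_succAbove]

/-- `R^{(j)}(A₁ ⊗ ⋯ ⊗ A_k) = vec(A_j) vec(⊗_{i ≠ j} A_i)ᵀ`
(here the order `k ≥ 1` of the paper is represented as `k + 1`). -/
theorem stmt_6 {F : Type*} [Field F] {m n k : ℕ} (j : Fin (k + 1))
    (A : Fin (k + 1) → Matrix (Fin m) (Fin n) F) :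
    Rj j (kprodFam A) =
      vecMulVec (_root_.vec (A j)) (_root_.vec (kprodFam (fun i => A (j.succAbove i)))) := by
  ext ⟨a, b⟩ ⟨r, c⟩
  exact kprodFam_insertNth j A a b r c
end

section
/- Let F be a field, k ≥ 1, let M be an m^k×n^k matrix over F and let A be an m×n matrix over F. Then M = ⊗^k A if and only if for every j ∈ {1,…,k}, R^{(j)}_{m×n}(M) = vec(A) · vec(⊗^{k-1} A)ᵀ. -/
open Matrix Kronecker

theorem kpow_insertNth {F : Type*} [Field F] {m n k : ℕ} (A : Matrix (Fin m) (Fin n) F)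
    (j : Fin (k + 1)) (a : Fin m) (b : Fin n) (r : Fin k → Fin m) (c : Fin k → Fin n) :
    kpow A (k + 1) (j.insertNth a r) (j.insertNth b c) = A a b * kpow A k r c := by
  simp only [kpow, Fin.prod_univ_succAbove _ j, Fin.insertNth_apply_same,
    Fin.insertNth_apply_succAbove]

theorem Rj_kpow {F : Type*} [Field F] {m n k : ℕ} (j : Fin (k + 1))
    (A : Matrix (Fin m) (Fin n) F) :
    Rj j (kpow A (k + 1)) = vecMulVec (_root_.vec A) (_root_.vec (kpow A k)) := by
  ext p q
  exact kpow_insertNth A j p.1 p.2 q.1 q.2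

theorem Rj_apply_removeNth {F : Type*} [Field F] {m n k : ℕ} (j : Fin (k + 1))
    (M : Matrix (Fin (k + 1) → Fin m) (Fin (k + 1) → Fin n) F)
    (r : Fin (k + 1) → Fin m) (c : Fin (k + 1) → Fin n) :
    Rj j M (r j, c j) (j.removeNth r, j.removeNth c) = M r c := by
  simp only [Rj, Fin.insertNth_self_removeNth]

theorem Rj_injective {F : Type*} [Field F] {m n k : ℕ} (j : Fin (k + 1)) :
    Function.Injective (Rj (F := F) (m := m) (n := n) j) := fun M N h => by
  ext r c
  rw [← Rj_apply_removeNth j M, ← Rj_apply_removeNth j N, h]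

/-- `M = ⊗^k A` iff `R^{(j)}(M) = vec(A) vec(⊗^{k-1} A)ᵀ` for
every `j` (here the order `k ≥ 1` of the paper is represented as `k + 1`). -/
theorem stmt_7 {F : Type*} [Field F] {m n k : ℕ}
    (M : Matrix (Fin (k + 1) → Fin m) (Fin (k + 1) → Fin n) F)
    (A : Matrix (Fin m) (Fin n) F) :
    M = kpow A (k + 1) ↔
      ∀ j : Fin (k + 1), Rj j M = vecMulVec (_root_.vec A) (_root_.vec (kpow A k)) :=
  ⟨fun h j => h ▸ Rj_kpow j A, fun h => Rj_injective 0 ((h 0).trans (Rj_kpow 0 A).symm)⟩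
end

section
/- Let F be a field, k ≥ 1, let M be a non-zero m^k×n^k matrix over F and let A be an m×n matrix over F with M = ⊗^k A. Then for every j ∈ {1,…,k}, the matrix R^{(j)}_{m×n}(M) has rank one. -/
open Matrix Kronecker

lemma rank_pos_of_ne_zero' {F : Type*} [Field F] {a b : Type*} [Fintype a] [Fintype b]
    [DecidableEq b] (A : Matrix a b F) (hA : A ≠ 0) : 1 ≤ A.rank := by
  rw [Nat.one_le_iff_ne_zero]
  intro h0
  apply hA
  have hbot : LinearMap.range A.mulVecLin = ⊥ := Submodule.finrank_eq_zero.mp h0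
  ext i j
  have hz : A.mulVec (Pi.single j 1) = 0 := by
    have := hbot ▸ (LinearMap.mem_range_self A.mulVecLin (Pi.single j 1))
    simpa using this
  have := congrFun hz i
  simpa [mulVec_single] using this

lemma rank_outer_le_one {F : Type*} [Field F] {a b : Type*} [Fintype a] [Fintype b]
    (u : a → F) (v : b → F) :
    (Matrix.of fun p q => u p * v q : Matrix a b F).rank ≤ 1 := by
  have : (Matrix.of fun p q => u p * v q : Matrix a b F) =
      (Matrix.of fun p (_ : Unit) => u p) * (Matrix.of fun (_ : Unit) q => v q) := by
    ext p q
    simp [Matrix.mul_apply]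
  rw [this]
  calc ((Matrix.of fun p (_ : Unit) => u p) * (Matrix.of fun (_ : Unit) q => v q)).rank
      ≤ (Matrix.of fun p (_ : Unit) => u p).rank := Matrix.rank_mul_le_left _ _
    _ ≤ Fintype.card Unit := Matrix.rank_le_card_width _
    _ = 1 := Fintype.card_unit

set_option maxHeartbeats 1000000 in
/-- If the non-zero matrix `M` is a `k`-th Kronecker power,
then `R^{(j)}(M)` has rank one for every `j`
(here the order `k ≥ 1` of the paper is represented as `k + 1`). -/
theorem stmt_8 {F : Type*} [Field F] {m n k : ℕ}
    (M : Matrix (Fin (k + 1) → Fin m) (Fin (k + 1) → Fin n) F) (hM : M ≠ 0)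
    (A : Matrix (Fin m) (Fin n) F) (h : M = kpow A (k + 1)) :
    ∀ j : Fin (k + 1), (Rj j M).rank = 1 := by
  intro j
  have hfact : Rj j M =
      Matrix.of fun p q => (fun p : Fin m × Fin n => A p.1 p.2) p *
        (fun q : (Fin k → Fin m) × (Fin k → Fin n) => kpow A k q.1 q.2) q := by
    ext p q
    simp only [Rj, h, kpow, Matrix.of_apply]
    rw [Fin.prod_univ_succAbove _ j]
    simp [Fin.insertNth_apply_same, Fin.insertNth_apply_succAbove]
  have hle : (Rj j M).rank ≤ 1 := by
    rw [hfact]; exact rank_outer_le_one _ _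
  have hne : Rj j M ≠ 0 := by
    intro h0
    apply hM
    ext r c
    have := congrFun (congrFun h0 (r j, c j))
      ((fun i => r (j.succAbove i)), (fun i => c (j.succAbove i)))
    have e1 : j.insertNth (r j) (fun i => r (j.succAbove i)) = r :=
      Fin.insertNth_self_removeNth j r
    have e2 : j.insertNth (c j) (fun i => c (j.succAbove i)) = c :=
      Fin.insertNth_self_removeNth j c
    simpa [Rj, e1, e2] using this
  exact le_antisymm hle (rank_pos_of_ne_zero' _ hne)
end

section
/- Let F be a field whose characteristic does not divide k (k ≥ 1), let A, B be m×n matrices over F and let α, β ∈ F. If R^Σ_{m×n}(α · ⊗^k A) = R^Σ_{m×n}(β · ⊗^k B), then α · ⊗^k A = β · ⊗^k B. (That is, R^Σ_{m×n} restricted to the set X = { α · ⊗^k A : A an m×n matrix, α ∈ F } is injective.) -/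
open Matrix Kronecker

lemma Rj_smul_kpow {F : Type*} [Field F] {m n k : ℕ} (j : Fin (k + 1))
    (A : Matrix (Fin m) (Fin n) F) (α : F) (p : Fin m × Fin n)
    (q : (Fin k → Fin m) × (Fin k → Fin n)) :
    Rj j (α • kpow A (k + 1)) p q = α * (A p.1 p.2 * ∏ i, A (q.1 i) (q.2 i)) := by
  simp only [Rj, kpow, Matrix.smul_apply, smul_eq_mul]
  rw [Fin.prod_univ_succAbove _ j]
  simp [Fin.insertNth_apply_same, Fin.insertNth_apply_succAbove]

lemma RSigma_smul_kpow {F : Type*} [Field F] {m n k : ℕ}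
    (A : Matrix (Fin m) (Fin n) F) (α : F) (p : Fin m × Fin n)
    (q : (Fin k → Fin m) × (Fin k → Fin n)) :
    RSigma (α • kpow A (k + 1)) p q
      = ((k + 1 : ℕ) : F) * (α * (A p.1 p.2 * ∏ i, A (q.1 i) (q.2 i))) := by
  simp only [RSigma, Matrix.sum_apply, Rj_smul_kpow, Finset.sum_const,
    Finset.card_univ, Fintype.card_fin, nsmul_eq_mul]

/-- If the characteristic of `F` does not divide `k`, then
`R^Σ` is injective on the set `{α • ⊗^k A}`
(here the order `k ≥ 1` of the paper is represented as `k + 1`). -/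
theorem stmt_10 {F : Type*} [Field F] {m n k : ℕ}
    (hchar : ((k + 1 : ℕ) : F) ≠ 0)
    (A B : Matrix (Fin m) (Fin n) F) (α β : F)
    (h : RSigma (α • kpow A (k + 1)) = RSigma (β • kpow B (k + 1))) :
    α • kpow A (k + 1) = β • kpow B (k + 1) := by
  funext r c
  have key := congrFun (congrFun h (r 0, c 0))
    (fun i => r i.succ, fun i => c i.succ)
  rw [RSigma_smul_kpow, RSigma_smul_kpow] at key
  have key' := mul_left_cancel₀ hchar key
  simpa [kpow, Matrix.smul_apply, smul_eq_mul, Fin.prod_univ_succ, mul_assoc]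
    using key'
end

section
/- Let M be the 1×8 real matrix (1, -1, 1, 0, 0, 0, 0, 0), regarded as a 1³×2³ matrix. Then there is no 1×2 real matrix A with M = A ⊗ A ⊗ A, yet R^Σ_{1×2}(M) (taken with k = 3) has rank one. -/
open Matrix Kronecker

/-!
A Kronecker cube `A ⊗ A ⊗ A` is unchanged when the tensor positions of rows and columns are
permuted simultaneously; as all row tuples are equal here, its entries at the columns `(0,0,1)`
and `(0,1,0)` agree, whereas `M` has `-1` and `1` there.

In `R^Σ(M)` the row indexed by `(0,1)` has, at the column `(0,(0,0))`, the entry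
`M(1,0,0) + M(0,1,0) + M(0,0,1) = 0 + 1 - 1`, and zeros elsewhere, since `M` vanishes on columns
with two entries `1`. So `R^Σ(M)` has a single nonzero row, the one indexed by `(0,0)`.
-/

theorem kpow_apply_comp_perm {F : Type*} [Field F] {m n k : ℕ} (A : Matrix (Fin m) (Fin n) F)
    (σ : Equiv.Perm (Fin k)) (r : Fin k → Fin m) (c : Fin k → Fin n) :
    kpow A k (r ∘ σ) (c ∘ σ) = kpow A k r c :=
  Equiv.prod_comp σ fun i => A (r i) (c i)

theorem Matrix.rank_eq_one_of_forall_ne_row_eq_zero {R m n : Type*} [Field R] [Finite m]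
    [Fintype n] {A : Matrix m n R} (i₀ : m) (hA : ∀ i ≠ i₀, A i = 0) (h : A i₀ ≠ 0) :
    A.rank = 1 := by
  have hspan : Submodule.span R (Set.range A) = R ∙ A i₀ := by
    refine le_antisymm (Submodule.span_le.2 ?_)
      (Submodule.span_mono (Set.singleton_subset_iff.2 (Set.mem_range_self i₀)))
    rintro _ ⟨i, rfl⟩
    by_cases hi : i = i₀
    · exact hi ▸ Submodule.mem_span_singleton_self _
    · simp [hA i hi]
  rw [rank_eq_finrank_span_row, Matrix.row, hspan, finrank_span_singleton h]

/-- The `1³×2³` real matrix `M = (1, -1, 1, 0, 0, 0, 0, 0)`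
is not a Kronecker cube, yet `R^Σ_{1×2}(M)` (with `k = 3`) has rank one. -/
theorem stmt_16
    (M : Matrix (Fin 3 → Fin 1) (Fin 3 → Fin 2) ℝ)
    (hM : M = fun _ c =>
      if c = ![0, 0, 0] then 1
      else if c = ![0, 0, 1] then -1
      else if c = ![0, 1, 0] then 1
      else 0) :
    (¬ ∃ A : Matrix (Fin 1) (Fin 2) ℝ, M = kpow A 3) ∧ (RSigma M).rank = 1 := by
  subst hM
  refine ⟨?_, ?_⟩
  · rintro ⟨A, hA⟩
    have hswap : (![0, 0, 1] : Fin 3 → Fin 2) ∘ Equiv.swap 1 2 = ![0, 1, 0] := by decide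
    have h := kpow_apply_comp_perm A (Equiv.swap 1 2) 0 ![0, 0, 1]
    rw [← hA, hswap] at h
    norm_num at h
  · refine Matrix.rank_eq_one_of_forall_ne_row_eq_zero (0, 0) ?_ fun h => ?_
    · rintro ⟨a, b⟩ hb
      obtain rfl : b = 1 := by fin_cases a; fin_cases b <;> simp_all
      ext ⟨r, c⟩
      fin_cases c <;> simp +decide [RSigma, Rj, Fin.sum_univ_three]
    · have h00 := congrFun h (0, ![0, 0])
      simp +decide [RSigma, Rj, Fin.sum_univ_three] at h00
      norm_num at h00
end
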